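/- Let x̃^n be a sample from the boosted distribution (the law of the minimizer x^{n,⋆} of Z over M i.i.d. samples from ρ^⊗n, with P(Z_{x^n} > δ) ≤ η for a single sample, conditioned on {Z_{x^{n,⋆}} ≤ δ}), with δ ∈ (0,1), η ∈ (0,1). Let K ⊆ {1,…,n} be a (random, measurable) function of x̃^n with #K ≥ n_min and Z_{x̃^n_K} ≤ δ. Then for any v ∈ L²_μ(X), E(‖Q^{x̃^n_K}_{V_m} v‖²) ≤ (1−δ)^{-1} M (1 − η^M)^{-1} (n/n_min) ‖v‖². -/

import Mathlib

/-!
On a subsample with `Z_K ≤ δ` the discrete norm dominates `(1 - δ)` times the `L²_μ` norm on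
`V_m`, and the least-squares projection does not increase the discrete norm, so
`‖Q v‖² ≤ (1 - δ)⁻¹ ‖v‖²_K ≤ (1 - δ)⁻¹ n_min⁻¹ ∑_j w(x_j) v(x_j)²`. Dominating the selected
draw by the sum over all `M` draws gives an integrable bound of mean `M n ‖v‖² / n_min`, since
`E_ρ[w v²] = ‖v‖²`. Conditioning on `{Z ≤ δ}` costs a factor at most `(1 - η^M)⁻¹`: the
minimiser is unstable only if all `M` independent draws are.
-/

open MeasureTheory ProbabilityTheory

noncomputable section

/-- Spectral norm (matrix operator norm w.r.t. the Euclidean norm) of a real square matrix. -/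
def specNorm {m : ℕ} (A : Matrix (Fin m) (Fin m) ℝ) : ℝ :=
  ‖Matrix.toEuclideanCLM (𝕜 := ℝ) A‖

variable {d : ℕ}

/-- Squared `L²_μ` norm: `‖v‖² = ∫ v² dμ`. -/
def l2normSq {X : Set (Fin d → ℝ)} (μ : Measure X) (v : X → ℝ) : ℝ :=
  ∫ t, v t ^ 2 ∂μ

/-- Squared discrete semi-norm `‖v‖²_{x^n} = (1/n) ∑ᵢ w(xⁱ) v(xⁱ)²`. -/
def discNormSq {X : Set (Fin d → ℝ)} (w : X → ℝ) {n : ℕ} (x : Fin n → X) (v : X → ℝ) : ℝ :=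
  (1 / (n : ℝ)) * ∑ i, w (x i) * v (x i) ^ 2

/-- Empirical Gram matrix `G_{x^n} = (1/n) ∑ᵢ w(xⁱ) φ(xⁱ) ⊗ φ(xⁱ)`. -/
def gram {X : Set (Fin d → ℝ)} {m : ℕ} (w : X → ℝ) (φ : Fin m → X → ℝ) {n : ℕ}
    (x : Fin n → X) : Matrix (Fin m) (Fin m) ℝ :=
  Matrix.of fun j k => (1 / (n : ℝ)) * ∑ i, w (x i) * (φ j (x i) * φ k (x i))

/-- Stability statistic `Z_{x^n} = ‖G_{x^n} − I‖₂`. -/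
def Zstat {X : Set (Fin d → ℝ)} {m : ℕ} (w : X → ℝ) (φ : Fin m → X → ℝ) {n : ℕ}
    (x : Fin n → X) : ℝ :=
  specNorm (gram w φ x - 1)

/-- Orthogonal projection onto `V_m`: `P_{V_m} u = ∑ⱼ (∫ u φⱼ dμ) φⱼ`. -/
def proj {X : Set (Fin d → ℝ)} (μ : Measure X) {m : ℕ} (φ : Fin m → X → ℝ) (u : X → ℝ) :
    X → ℝ :=
  fun t => ∑ j, (∫ s, u s * φ j s ∂μ) * φ j t

/-- Weighted supremum norm `‖v‖_{∞,w} = sup_x w(x)^{1/2} |v(x)|`. -/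
def wSupNorm {X : Set (Fin d → ℝ)} (w : X → ℝ) (v : X → ℝ) : ℝ :=
  ⨆ t : X, Real.sqrt (w t) * |v t|

/-- The approximation space `V_m`, the span of `φ_1, …, φ_m`. -/
def Vspan {X : Set (Fin d → ℝ)} {m : ℕ} (φ : Fin m → X → ℝ) : Submodule ℝ (X → ℝ) :=
  Submodule.span ℝ (Set.range φ)

/-- Squared discrete semi-norm over a subsample indexed by `K`. -/
def discNormSqK {X : Set (Fin d → ℝ)} (w : X → ℝ) {n : ℕ} (x : Fin n → X)
    (K : Finset (Fin n)) (v : X → ℝ) : ℝ :=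
  (1 / (K.card : ℝ)) * ∑ i ∈ K, w (x i) * v (x i) ^ 2

/-- Empirical Gram matrix over a subsample indexed by `K`. -/
def gramK {X : Set (Fin d → ℝ)} {m : ℕ} (w : X → ℝ) (φ : Fin m → X → ℝ) {n : ℕ}
    (x : Fin n → X) (K : Finset (Fin n)) : Matrix (Fin m) (Fin m) ℝ :=
  Matrix.of fun j k => (1 / (K.card : ℝ)) * ∑ i ∈ K, w (x i) * (φ j (x i) * φ k (x i))

/-- Stability statistic of a subsample. -/
def ZstatK {X : Set (Fin d → ℝ)} {m : ℕ} (w : X → ℝ) (φ : Fin m → X → ℝ) {n : ℕ}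
    (x : Fin n → X) (K : Finset (Fin n)) : ℝ :=
  specNorm (gramK w φ x K - 1)

/-- Law of `M` i.i.d. samples, each an `n`-tuple of i.i.d. points with distribution `ρ`. -/
def bigP {X : Set (Fin d → ℝ)} (ρ : Measure X) (M n : ℕ) : Measure (Fin M → Fin n → X) :=
  Measure.pi fun _ => Measure.pi fun _ => ρ

/-- The constant `C(ε,M) = M (1−ε)^{1−ε}/(M−ε)^{1−ε}` (with `0⁰ = 1`). -/
def Cconst (M : ℕ) (ε : ℝ) : ℝ :=
  (M : ℝ) * (1 - ε) ^ (1 - ε) / ((M : ℝ) - ε) ^ (1 - ε)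

open scoped Matrix

lemma abs_dotProduct_mulVec_le_specNorm {m : ℕ} (A : Matrix (Fin m) (Fin m) ℝ) (c : Fin m → ℝ) :
    |c ⬝ᵥ (A *ᵥ c)| ≤ specNorm A * (c ⬝ᵥ c) := by
  set x : EuclideanSpace ℝ (Fin m) := WithLp.toLp 2 c
  have hinner : ∀ u, inner ℝ (WithLp.toLp 2 u : EuclideanSpace ℝ (Fin m)) x = c ⬝ᵥ u := fun u =>
    EuclideanSpace.inner_toLp_toLp u c |>.trans (by simp)
  calc |c ⬝ᵥ (A *ᵥ c)| = |inner ℝ (Matrix.toEuclideanCLM (𝕜 := ℝ) A x) x| := by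
        rw [← hinner]; rfl
    _ ≤ ‖Matrix.toEuclideanCLM (𝕜 := ℝ) A x‖ * ‖x‖ := abs_real_inner_le_norm _ _
    _ ≤ specNorm A * ‖x‖ * ‖x‖ := by
        gcongr; exact (Matrix.toEuclideanCLM (𝕜 := ℝ) A).le_opNorm x
    _ = specNorm A * (c ⬝ᵥ c) := by rw [mul_assoc, ← real_inner_self_eq_norm_mul_norm, hinner]

lemma one_sub_specNorm_mul_le_dotProduct_mulVec {m : ℕ} (G : Matrix (Fin m) (Fin m) ℝ)
    (c : Fin m → ℝ) : (1 - specNorm (G - 1)) * (c ⬝ᵥ c) ≤ c ⬝ᵥ (G *ᵥ c) := by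
  have h := abs_le.mp (abs_dotProduct_mulVec_le_specNorm (G - 1) c)
  rw [Matrix.sub_mulVec, Matrix.one_mulVec, dotProduct_sub] at h
  linarith [h.1]

lemma continuous_specNorm {m : ℕ} : Continuous (specNorm (m := m)) :=
  continuous_norm.comp (LinearMap.continuous_of_finiteDimensional
    (Matrix.toEuclideanCLM (𝕜 := ℝ) (n := Fin m)).toAlgEquiv.toLinearMap)

lemma measurable_Zstat {X : Set (Fin d → ℝ)} {m n : ℕ} {w : X → ℝ} {φ : Fin m → X → ℝ}
    (hw : Measurable w) (hφ : ∀ j, Measurable (φ j)) :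
    Measurable (Zstat w φ : (Fin n → X) → ℝ) := by
  have hcont : Continuous fun B : Fin m → Fin m → ℝ => specNorm (Matrix.of B - 1) :=
    continuous_specNorm.comp (((continuous_matrix (f := fun B : Fin m → Fin m → ℝ => Matrix.of B)
      fun j k => by fun_prop).sub continuous_const))
  refine hcont.measurable.comp (measurable_pi_lambda _ fun j => measurable_pi_lambda _ fun k => ?_)
  show Measurable fun y : Fin n → X => gram w φ y j k
  simp only [gram, Matrix.of_apply]
  fun_prop

lemma measurable_apply_self_apply {ι β : Type*} [Countable ι] [MeasurableSpace ι]
    [MeasurableSingletonClass ι] [MeasurableSpace β] {I : (ι → β) → ι} (hI : Measurable I) :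
    Measurable fun ω : ι → β => ω (I ω) :=
  (measurable_from_prod_countable_left (f := fun p : (ι → β) × ι => p.1 p.2)
    measurable_pi_apply).comp (measurable_id.prodMk hI)

section Norms

variable {X : Set (Fin d → ℝ)} {m n : ℕ}

lemma discNormSqK_sum_smul (w : X → ℝ) (φ : Fin m → X → ℝ) (y : Fin n → X)
    (K : Finset (Fin n)) (c : Fin m → ℝ) :
    discNormSqK w y K (∑ j, c j • φ j) = c ⬝ᵥ (gramK w φ y K *ᵥ c) := by
  simp only [discNormSqK, gramK, dotProduct, Matrix.mulVec, Matrix.of_apply, Finset.sum_apply,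
    Pi.smul_apply, smul_eq_mul, sq, Finset.mul_sum, Finset.sum_mul]
  rw [Finset.sum_comm]
  refine Finset.sum_congr rfl fun j _ => ?_
  rw [Finset.sum_comm]
  exact Finset.sum_congr rfl fun k _ => Finset.sum_congr rfl fun i _ => by ring

lemma l2normSq_sum_smul (μ : Measure X) {φ : Fin m → X → ℝ} (hφ : ∀ j, MemLp (φ j) 2 μ)
    (hortho : ∀ i j, (∫ t, φ i t * φ j t ∂μ) = if i = j then (1 : ℝ) else 0) (c : Fin m → ℝ) :
    l2normSq μ (∑ j, c j • φ j) = c ⬝ᵥ c := by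
  have hint : ∀ j k, Integrable (fun t => c j * c k * (φ j t * φ k t)) μ :=
    fun j k => ((hφ j).integrable_mul (hφ k)).const_mul (c j * c k)
  have hsq : ∀ t, (∑ j, c j • φ j) t ^ 2 = ∑ j, ∑ k, c j * c k * (φ j t * φ k t) := by
    intro t
    simp only [Finset.sum_apply, Pi.smul_apply, smul_eq_mul, sq, Finset.sum_mul_sum]
    exact Finset.sum_congr rfl fun j _ => Finset.sum_congr rfl fun k _ => by ring
  simp only [l2normSq, hsq]
  rw [integral_finsetSum _ fun j _ => integrable_finsetSum _ fun k _ => hint j k]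
  simp_rw [integral_finsetSum _ fun k _ => hint _ k, integral_const_mul, hortho]
  simp [dotProduct]

lemma one_sub_ZstatK_mul_l2normSq_le (μ : Measure X) (w : X → ℝ) {φ : Fin m → X → ℝ}
    (hφ : ∀ j, MemLp (φ j) 2 μ)
    (hortho : ∀ i j, (∫ t, φ i t * φ j t ∂μ) = if i = j then (1 : ℝ) else 0)
    (y : Fin n → X) (K : Finset (Fin n)) {q : X → ℝ} (hq : q ∈ Vspan φ) :
    (1 - ZstatK w φ y K) * l2normSq μ q ≤ discNormSqK w y K q := by
  obtain ⟨c, rfl⟩ := (Submodule.mem_span_range_iff_exists_fun ℝ).mp hq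
  rw [l2normSq_sum_smul μ hφ hortho, discNormSqK_sum_smul]
  exact one_sub_specNorm_mul_le_dotProduct_mulVec _ c

end Norms

section LeastSquares

variable {X : Set (Fin d → ℝ)} {n : ℕ} (w : X → ℝ) (y : Fin n → X) (K : Finset (Fin n))

lemma discNormSqK_nonneg (hw : ∀ t, 0 ≤ w t) (u : X → ℝ) : 0 ≤ discNormSqK w y K u :=
  mul_nonneg (by positivity) (Finset.sum_nonneg fun i _ => mul_nonneg (hw _) (sq_nonneg _))

lemma discNormSqK_sub_smul (v q : X → ℝ) (t : ℝ) :
    discNormSqK w y K (v - t • q) = discNormSqK w y K v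
      - 2 * t * ((1 / (K.card : ℝ)) * ∑ i ∈ K, w (y i) * (v (y i) * q (y i)))
      + t ^ 2 * discNormSqK w y K q := by
  simp only [discNormSqK, Pi.sub_apply, Pi.smul_apply, smul_eq_mul, Finset.mul_sum,
    ← Finset.sum_sub_distrib, ← Finset.sum_add_distrib]
  exact Finset.sum_congr rfl fun i _ => by ring

/-- The quadratic `t ↦ ‖v - t q‖²_K - ‖v - q‖²_K` is nonnegative, so its discriminant
`4 (⟨v, q⟩_K - ‖q‖²_K)²` vanishes: `v - q` is orthogonal to `q`. -/
lemma discNormSqK_le_of_forall_le_sub_smul (hw : ∀ t, 0 ≤ w t) {v q : X → ℝ}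
    (hmin : ∀ t : ℝ, discNormSqK w y K (v - q) ≤ discNormSqK w y K (v - t • q)) :
    discNormSqK w y K q ≤ discNormSqK w y K v := by
  have hexp := discNormSqK_sub_smul w y K v q
  have hexp₁ := hexp 1
  rw [one_smul] at hexp₁
  set B := (1 / (K.card : ℝ)) * ∑ i ∈ K, w (y i) * (v (y i) * q (y i))
  set C := discNormSqK w y K q
  have hdiscrim : discrim C (-2 * B) (2 * B - C) ≤ 0 := by
    refine discrim_le_zero fun t => ?_
    have h := hmin t
    rw [hexp₁, hexp] at h
    linarith
  have hBC : B = C := by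
    rw [discrim] at hdiscrim
    nlinarith [sq_nonneg (B - C)]
  have h1 := discNormSqK_nonneg w y K hw (v - q)
  rw [hexp₁] at h1
  linarith

end LeastSquares

section Stability

variable {X : Set (Fin d → ℝ)} {m n : ℕ}

lemma l2normSq_le_of_forall_discNormSqK_le (μ : Measure X) {w : X → ℝ} (hw : ∀ t, 0 ≤ w t)
    {φ : Fin m → X → ℝ} (hφ : ∀ j, MemLp (φ j) 2 μ)
    (hortho : ∀ i j, (∫ t, φ i t * φ j t ∂μ) = if i = j then (1 : ℝ) else 0)
    {y : Fin n → X} {K : Finset (Fin n)} {δ : ℝ} (hδ : δ < 1) (hZ : ZstatK w φ y K ≤ δ)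
    {v q : X → ℝ} (hq : q ∈ Vspan φ)
    (hmin : ∀ g ∈ Vspan φ, discNormSqK w y K (v - q) ≤ discNormSqK w y K (v - g)) :
    l2normSq μ q ≤ (1 - δ)⁻¹ * discNormSqK w y K v := by
  have hq0 : 0 ≤ l2normSq μ q := integral_nonneg fun t => sq_nonneg _
  rw [le_inv_mul_iff₀ (sub_pos.mpr hδ)]
  calc (1 - δ) * l2normSq μ q ≤ (1 - ZstatK w φ y K) * l2normSq μ q := by gcongr
    _ ≤ discNormSqK w y K q := one_sub_ZstatK_mul_l2normSq_le μ w hφ hortho y K hq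
    _ ≤ discNormSqK w y K v := discNormSqK_le_of_forall_le_sub_smul w y K hw
          fun t => hmin _ (Submodule.smul_mem _ t hq)

lemma discNormSqK_le_inv_mul_sum_sum {ι : Type*} [Fintype ι] {w : X → ℝ} (hw : ∀ t, 0 ≤ w t)
    (ω : ι → Fin n → X) (i : ι) {K : Finset (Fin n)} {nmin : ℕ} (hnmin : 0 < nmin)
    (hK : nmin ≤ K.card) (v : X → ℝ) :
    discNormSqK w (ω i) K v ≤ (nmin : ℝ)⁻¹ * ∑ i', ∑ j, w (ω i' j) * v (ω i' j) ^ 2 := by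
  have hterm : ∀ i' j, 0 ≤ w (ω i' j) * v (ω i' j) ^ 2 :=
    fun _ _ => mul_nonneg (hw _) (sq_nonneg _)
  rw [discNormSqK, one_div]
  gcongr
  · exact Finset.sum_nonneg fun j _ => hterm i j
  · calc ∑ j ∈ K, w (ω i j) * v (ω i j) ^ 2 ≤ ∑ j, w (ω i j) * v (ω i j) ^ 2 :=
          Finset.sum_le_sum_of_subset_of_nonneg K.subset_univ fun j _ _ => hterm i j
      _ ≤ ∑ i', ∑ j, w (ω i' j) * v (ω i' j) ^ 2 :=
          Finset.single_le_sum (f := fun i' => ∑ j, w (ω i' j) * v (ω i' j) ^ 2)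
            (fun i' _ => Finset.sum_nonneg fun j _ => hterm i' j) (Finset.mem_univ i)

lemma l2normSq_le_mul_sum_sum (μ : Measure X) {w : X → ℝ} (hw : ∀ t, 0 ≤ w t)
    {φ : Fin m → X → ℝ} (hφ : ∀ j, MemLp (φ j) 2 μ)
    (hortho : ∀ i j, (∫ t, φ i t * φ j t ∂μ) = if i = j then (1 : ℝ) else 0)
    {ι : Type*} [Fintype ι] (ω : ι → Fin n → X) (i : ι) {K : Finset (Fin n)} {nmin : ℕ}
    (hnmin : 0 < nmin) (hK : nmin ≤ K.card) {δ : ℝ} (hδ : δ < 1)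
    (hZ : ZstatK w φ (ω i) K ≤ δ) {v q : X → ℝ} (hq : q ∈ Vspan φ)
    (hmin : ∀ g ∈ Vspan φ, discNormSqK w (ω i) K (v - q) ≤ discNormSqK w (ω i) K (v - g)) :
    l2normSq μ q ≤
      (1 - δ)⁻¹ * (nmin : ℝ)⁻¹ * ∑ i', ∑ j, w (ω i' j) * v (ω i' j) ^ 2 := by
  rw [mul_assoc]
  exact (l2normSq_le_of_forall_discNormSqK_le μ hw hφ hortho hδ hZ hq hmin).trans
    (mul_le_mul_of_nonneg_left (discNormSqK_le_inv_mul_sum_sum hw ω i hnmin hK v)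
      (inv_nonneg.mpr (sub_pos.mpr hδ).le))

end Stability

section Probability

lemma integral_sum_comp_eval {ι α : Type*} [Fintype ι] [MeasurableSpace α] (ρ : Measure α)
    [IsProbabilityMeasure ρ] {f : α → ℝ} (hf : Integrable f ρ) :
    ∫ y, ∑ i, f (y i) ∂(Measure.pi fun _ : ι => ρ) = Fintype.card ι * ∫ x, f x ∂ρ := by
  rw [integral_finsetSum _ fun i _ => integrable_comp_eval hf]
  simp [integral_comp_eval (μ := fun _ => ρ) hf.1]

lemma integrable_sum_comp_eval {ι α : Type*} [Fintype ι] [MeasurableSpace α] (ρ : Measure α)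
    [IsFiniteMeasure ρ] {f : α → ℝ} (hf : Integrable f ρ) :
    Integrable (fun y => ∑ i, f (y i)) (Measure.pi fun _ : ι => ρ) :=
  integrable_finsetSum _ fun _ _ => integrable_comp_eval hf

lemma integrable_mul_withDensity_inv_iff {α : Type*} [MeasurableSpace α] (μ : Measure α)
    {w : α → ℝ} (hw : ∀ t, 0 < w t) (hwm : Measurable w) {g : α → ℝ} :
    Integrable (fun t => w t * g t) (μ.withDensity fun t => ENNReal.ofReal (w t)⁻¹) ↔
      Integrable g μ := by
  rw [integrable_withDensity_iff_integrable_smul' (by fun_prop)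
    (Filter.Eventually.of_forall fun _ => ENNReal.ofReal_lt_top)]
  refine integrable_congr (Filter.Eventually.of_forall fun t => ?_)
  simp [ENNReal.toReal_ofReal (inv_nonneg.mpr (hw t).le), (hw t).ne']

lemma integral_mul_withDensity_inv {α : Type*} [MeasurableSpace α] (μ : Measure α)
    {w : α → ℝ} (hw : ∀ t, 0 < w t) (hwm : Measurable w) (g : α → ℝ) :
    ∫ t, w t * g t ∂(μ.withDensity fun t => ENNReal.ofReal (w t)⁻¹) = ∫ t, g t ∂μ := by
  rw [integral_withDensity_eq_integral_toReal_smul (by fun_prop)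
    (Filter.Eventually.of_forall fun _ => ENNReal.ofReal_lt_top)]
  refine integral_congr_ae (Filter.Eventually.of_forall fun t => ?_)
  simp [ENNReal.toReal_ofReal (inv_nonneg.mpr (hw t).le), (hw t).ne']

lemma ofReal_one_sub_pow_le_pi_setOf_apply_le {ι β : Type*} [Fintype ι] [MeasurableSpace β]
    (ν : Measure β) [IsProbabilityMeasure ν] (Z : β → ℝ) (I : (ι → β) → ι)
    (hI : ∀ (ω : ι → β) i, Z (ω (I ω)) ≤ Z (ω i)) {δ η : ℝ} (hη : 0 ≤ η)
    (hν : ν {y | δ < Z y} ≤ ENNReal.ofReal η) :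
    ENNReal.ofReal (1 - η ^ Fintype.card ι) ≤
      Measure.pi (fun _ => ν) {ω : ι → β | Z (ω (I ω)) ≤ δ} := by
  set P := Measure.pi fun _ : ι => ν
  have hcompl : {ω : ι → β | Z (ω (I ω)) ≤ δ}ᶜ = Set.univ.pi fun _ : ι => {y | δ < Z y} := by
    ext ω
    simp only [Set.mem_compl_iff, Set.mem_ofPred_eq, not_le, Set.mem_univ_pi]
    exact ⟨fun h i => h.trans_le (hI ω i), fun h => h (I ω)⟩
  have hPc : P {ω | Z (ω (I ω)) ≤ δ}ᶜ ≤ ENNReal.ofReal (η ^ Fintype.card ι) := by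
    rw [hcompl, Measure.pi_pi, ENNReal.ofReal_pow hη, ← Finset.card_univ, ← Finset.prod_const]
    exact Finset.prod_le_prod' fun _ _ => hν
  calc ENNReal.ofReal (1 - η ^ Fintype.card ι)
      = 1 - ENNReal.ofReal (η ^ Fintype.card ι) := by
        rw [ENNReal.ofReal_sub _ (by positivity), ENNReal.ofReal_one]
    _ ≤ P Set.univ - P {ω | Z (ω (I ω)) ≤ δ}ᶜ := by rw [measure_univ]; gcongr
    _ ≤ P {ω | Z (ω (I ω)) ≤ δ} := by
        rw [tsub_le_iff_right, ← Set.union_compl_self {ω | Z (ω (I ω)) ≤ δ}]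
        exact measure_union_le _ _

lemma integral_cond_le_inv_mul_integral {Ω : Type*} [MeasurableSpace Ω] (P : Measure Ω)
    [IsFiniteMeasure P] {A : Set Ω} (hA : MeasurableSet A) {f g : Ω → ℝ} (hfg : ∀ ω ∈ A, f ω ≤ g ω) (hg0 : 0 ≤ g)
    (hg : Integrable g P) {p : ℝ} (hp : 0 < p) (hpA : ENNReal.ofReal p ≤ P A) :
    ∫ ω, f ω ∂P[|A] ≤ p⁻¹ * ∫ ω, g ω ∂P := by
  have hRHS : 0 ≤ p⁻¹ * ∫ ω, g ω ∂P := mul_nonneg (inv_nonneg.mpr hp.le) (integral_nonneg hg0)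
  by_cases hf : Integrable f P[|A]
  swap
  · rwa [integral_undef hf]
  have hPA : p ≤ (P A).toReal := (ENNReal.ofReal_le_iff_le_toReal (measure_ne_top P A)).mp hpA
  have hPA0 : P A ≠ 0 := ((ENNReal.ofReal_pos.mpr hp).trans_le hpA).ne'
  have hgA : Integrable g P[|A] := hg.restrict.smul_measure (ENNReal.inv_ne_top.mpr hPA0)
  calc ∫ ω, f ω ∂P[|A]
      ≤ ∫ ω, g ω ∂P[|A] := integral_mono_ae hf hgA (ae_cond_of_forall_mem hA hfg)
    _ = (P A).toReal⁻¹ * ∫ ω in A, g ω ∂P := by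
        rw [ProbabilityTheory.cond, integral_smul_measure, ENNReal.toReal_inv, smul_eq_mul]
    _ ≤ p⁻¹ * ∫ ω, g ω ∂P :=
        mul_le_mul (inv_anti₀ hp hPA) (setIntegral_le_integral hg (ae_of_all _ hg0))
          (setIntegral_nonneg hA fun ω _ => hg0 ω) (inv_nonneg.mpr hp.le)

end Probability

theorem boosted_subsample_lsq_projection_stability_general
    {m n M : ℕ} (hM : 0 < M) {X : Set (Fin d → ℝ)} (μ : Measure X)
    (w : X → ℝ) (hw : ∀ t, 0 < w t) (hwm : Measurable w)
    (ρ : Measure X) [IsProbabilityMeasure ρ]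
    (hρ : ρ = μ.withDensity fun t => ENNReal.ofReal (w t)⁻¹)
    (φ : Fin m → X → ℝ) (hφm : ∀ j, Measurable (φ j)) (hφ2 : ∀ j, MemLp (φ j) 2 μ)
    (hortho : ∀ i j, (∫ t, φ i t * φ j t ∂μ) = if i = j then (1 : ℝ) else 0)
    (δ η : ℝ) (hδ1 : δ < 1) (hη0 : 0 < η) (hη1 : η < 1)
    (hPZ : (Measure.pi fun _ : Fin n => ρ) {y | δ < Zstat w φ y} ≤ ENNReal.ofReal η)
    (Istar : (Fin M → Fin n → X) → Fin M) (hIm : Measurable Istar)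
    (hmin : ∀ (ω : Fin M → Fin n → X) (i : Fin M),
      Zstat w φ (ω (Istar ω)) ≤ Zstat w φ (ω i))
    (nmin : ℕ) (hnmin : 0 < nmin)
    (Kf : (Fin n → X) → Finset (Fin n))
    (hK : ∀ y : Fin n → X, Zstat w φ y ≤ δ →
      nmin ≤ (Kf y).card ∧ ZstatK w φ y (Kf y) ≤ δ)
    (v : X → ℝ) (hv2 : MemLp v 2 μ)
    (Q : (Fin n → X) → X → ℝ)
    (hQ : ∀ y : Fin n → X, Q y ∈ Vspan φ ∧
      ∀ g ∈ Vspan φ, discNormSqK w y (Kf y) (v - Q y) ≤ discNormSqK w y (Kf y) (v - g)) :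
    (∫ ω, l2normSq μ (Q (ω (Istar ω)))
        ∂((bigP ρ M n)[|{ω | Zstat w φ (ω (Istar ω)) ≤ δ}])) ≤
      (1 - δ)⁻¹ * M * (1 - η ^ M)⁻¹ * ((n : ℝ) / (nmin : ℝ)) * l2normSq μ v := by
  set P := bigP ρ M n
  have hP : P = Measure.pi fun _ => Measure.pi fun _ => ρ := rfl
  have : IsProbabilityMeasure P := hP ▸ inferInstance
  set A := {ω : Fin M → Fin n → X | Zstat w φ (ω (Istar ω)) ≤ δ}
  set F : X → ℝ := fun t => w t * v t ^ 2
  set c : ℝ := (1 - δ)⁻¹ * (nmin : ℝ)⁻¹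
  have hw0 : ∀ t, 0 ≤ w t := fun t => (hw t).le
  have hc0 : 0 ≤ c := mul_nonneg (inv_nonneg.mpr (sub_pos.mpr hδ1).le) (by positivity)
  have hF : Integrable F ρ :=
    hρ ▸ (integrable_mul_withDensity_inv_iff μ hw hwm).mpr hv2.integrable_sq
  have hbound : ∀ ω ∈ A, l2normSq μ (Q (ω (Istar ω))) ≤ c * ∑ i, ∑ j, F (ω i j) :=
    fun ω hω => l2normSq_le_mul_sum_sum μ hw0 hφ2 hortho ω _ hnmin (hK _ hω).1 hδ1 (hK _ hω).2
      (hQ _).1 (hQ _).2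
  have hPA : ENNReal.ofReal (1 - η ^ M) ≤ P A := by
    simpa [hP] using ofReal_one_sub_pow_le_pi_setOf_apply_le _ _ Istar hmin hη0.le hPZ
  have hAm : MeasurableSet A :=
    measurableSet_le ((measurable_Zstat hwm hφm).comp (measurable_apply_self_apply hIm))
      measurable_const
  have hEg : ∫ ω, c * ∑ i, ∑ j, F (ω i j) ∂P = c * (M * (n * l2normSq μ v)) := by
    rw [integral_const_mul, hP, integral_sum_comp_eval _ (integrable_sum_comp_eval _ hF),
      integral_sum_comp_eval _ hF, hρ, integral_mul_withDensity_inv μ hw hwm]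
    simp [l2normSq]
  calc _ ≤ (1 - η ^ M)⁻¹ * ∫ ω, c * ∑ i, ∑ j, F (ω i j) ∂P :=
        integral_cond_le_inv_mul_integral P hAm hbound
          (fun ω => mul_nonneg hc0 <| Finset.sum_nonneg fun i _ => Finset.sum_nonneg fun j _ =>
            mul_nonneg (hw0 _) (sq_nonneg _))
          ((hP ▸ integrable_sum_comp_eval _ (integrable_sum_comp_eval _ hF)).const_mul c)
          (sub_pos.mpr (pow_lt_one₀ hη0.le hη1 hM.ne')) hPA
    _ = _ := by rw [hEg]; ring

/-- stability in expectation of the weighted least-squares projection built on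
a stable subsample of the boosted sample. -/
theorem boosted_subsample_lsq_projection_stability
    {m n M : ℕ} (hM : 0 < M) {X : Set (Fin d → ℝ)} (μ : Measure X) [IsProbabilityMeasure μ]
    (w : X → ℝ) (hw : ∀ t, 0 < w t) (hwm : Measurable w)
    (ρ : Measure X) [IsProbabilityMeasure ρ]
    (hρ : ρ = μ.withDensity fun t => ENNReal.ofReal (w t)⁻¹)
    (φ : Fin m → X → ℝ) (hφm : ∀ j, Measurable (φ j)) (hφ2 : ∀ j, MemLp (φ j) 2 μ)
    (hortho : ∀ i j, (∫ t, φ i t * φ j t ∂μ) = if i = j then (1 : ℝ) else 0)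
    (δ η : ℝ) (hδ0 : 0 < δ) (hδ1 : δ < 1) (hη0 : 0 < η) (hη1 : η < 1)
    (hPZ : (Measure.pi fun _ : Fin n => ρ) {y | δ < Zstat w φ y} ≤ ENNReal.ofReal η)
    (Istar : (Fin M → Fin n → X) → Fin M) (hIm : Measurable Istar)
    (hmin : ∀ (ω : Fin M → Fin n → X) (i : Fin M),
      Zstat w φ (ω (Istar ω)) ≤ Zstat w φ (ω i))
    (hexch : ∀ σ : Equiv.Perm (Fin M),
      Measure.map (fun ω : Fin M → Fin n → X => ((fun i => ω (σ i)), σ.symm (Istar ω)))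
          (bigP ρ M n) =
        Measure.map (fun ω => (ω, Istar ω)) (bigP ρ M n))
    (nmin : ℕ) (hnmin : 0 < nmin)
    (Kf : (Fin n → X) → Finset (Fin n))
    (hK : ∀ y : Fin n → X, Zstat w φ y ≤ δ →
      nmin ≤ (Kf y).card ∧ ZstatK w φ y (Kf y) ≤ δ)
    (v : X → ℝ) (hvm : Measurable v) (hv2 : MemLp v 2 μ)
    (Q : (Fin n → X) → X → ℝ)
    (hQ : ∀ y : Fin n → X, Q y ∈ Vspan φ ∧
      ∀ g ∈ Vspan φ, discNormSqK w y (Kf y) (v - Q y) ≤ discNormSqK w y (Kf y) (v - g)) :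
    (∫ ω, l2normSq μ (Q (ω (Istar ω)))
        ∂((bigP ρ M n)[|{ω | Zstat w φ (ω (Istar ω)) ≤ δ}])) ≤
      (1 - δ)⁻¹ * M * (1 - η ^ M)⁻¹ * ((n : ℝ) / (nmin : ℝ)) * l2normSq μ v :=
  boosted_subsample_lsq_projection_stability_general hM μ w hw hwm ρ hρ φ hφm hφ2 hortho δ η hδ1 hη0
    hη1 hPZ Istar hIm hmin nmin hnmin Kf hK v hv2 Q hQ
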